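/- arXiv:2303.01670 — 2 statements merged into one kernel-verified Lean document; each statement's English description precedes it below -/
import Mathlib

section
/- Let R be a ring and let V₁', V₁, V₂, V₃, V₃' be R-modules that are finite as sets. Suppose given R-linear maps forming a commutative diagram of two short exact sequences sharing the middle term V₂: a short exact sequence 0 → V₁' →^{f'} V₂ →^{g} V₃ → 0 (f' injective, g surjective, range f' = ker g), a short exact sequence 0 → V₁ →^{f} V₂ →^{g'} V₃' → 0 (f injective, g' surjective, range f = ker g'), together with maps h' : V₁' → V₁ and h : V₃ → V₃' satisfying f ∘ h' = f' and h ∘ g = g'. Then Nat.card V₁ · Nat.card V₃ = Nat.card V₂ · Nat.card (range (g ∘ f)). -/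
lemma card_ker_mul_card_range' {R M N : Type*} [Ring R] [AddCommGroup M] [AddCommGroup N]
    [Module R M] [Module R N] [Finite M] (φ : M →ₗ[R] N) :
    Nat.card M = Nat.card (LinearMap.ker φ) * Nat.card (LinearMap.range φ) := by
  have h1 := AddSubgroup.card_mul_index (AddMonoidHom.ker φ.toAddMonoidHom)
  rw [AddSubgroup.index_ker] at h1
  rw [← h1]
  congr 1

theorem card_of_two_short_exact_sequences
    {R : Type*} [Ring R]
    {V₁' V₁ V₂ V₃ V₃' : Type*}
    [AddCommGroup V₁'] [Module R V₁']
    [AddCommGroup V₁] [Module R V₁]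
    [AddCommGroup V₂] [Module R V₂]
    [AddCommGroup V₃] [Module R V₃]
    [AddCommGroup V₃'] [Module R V₃']
    [Finite V₁'] [Finite V₁] [Finite V₂] [Finite V₃] [Finite V₃']
    (f' : V₁' →ₗ[R] V₂) (g : V₂ →ₗ[R] V₃)
    (f : V₁ →ₗ[R] V₂) (g' : V₂ →ₗ[R] V₃')
    (h' : V₁' →ₗ[R] V₁) (h : V₃ →ₗ[R] V₃')
    (hf' : Function.Injective f') (hg : Function.Surjective g)
    (hex₁ : LinearMap.range f' = LinearMap.ker g)
    (hf : Function.Injective f) (hg' : Function.Surjective g')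
    (hex₂ : LinearMap.range f = LinearMap.ker g')
    (hcomm₁ : f ∘ₗ h' = f') (hcomm₂ : h ∘ₗ g = g') :
    Nat.card V₁ * Nat.card V₃ =
      Nat.card V₂ * Nat.card (LinearMap.range (g ∘ₗ f)) := by
  -- card of range g = card V₃
  have hrg : Nat.card (LinearMap.range g) = Nat.card V₃ := by
    rw [LinearMap.range_eq_top.mpr hg]
    exact Nat.card_congr (Submodule.topEquiv (R := R) (M := V₃)).toEquiv
  -- card of ker g = card V₁'
  have hkg : Nat.card (LinearMap.ker g) = Nat.card V₁' := by
    rw [← hex₁]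
    exact (Nat.card_congr (LinearEquiv.ofInjective f' hf').toEquiv).symm
  -- card V₂ = card V₁' * card V₃
  have e2 : Nat.card V₂ = Nat.card V₁' * Nat.card V₃ := by
    rw [card_ker_mul_card_range' g, hkg, hrg]
  -- ker (g ∘ f) ≃ V₁'
  have hker : Nat.card (LinearMap.ker (g ∘ₗ f)) = Nat.card V₁' := by
    have hmem : ∀ x : V₁', h' x ∈ LinearMap.ker (g ∘ₗ f) := by
      intro x
      have : f (h' x) = f' x := LinearMap.congr_fun hcomm₁ x
      simp only [LinearMap.mem_ker, LinearMap.comp_apply, this]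
      have : f' x ∈ LinearMap.ker g := hex₁ ▸ LinearMap.mem_range_self f' x
      exact this
    have hbij : Function.Bijective (fun x : V₁' => (⟨h' x, hmem x⟩ : LinearMap.ker (g ∘ₗ f))) := by
      constructor
      · intro x y hxy
        apply hf'
        rw [← LinearMap.congr_fun hcomm₁ x, ← LinearMap.congr_fun hcomm₁ y]
        simpa using congrArg (f ·.1) hxy
      · rintro ⟨a, ha⟩
        have : f a ∈ LinearMap.range f' := by
          rw [hex₁]
          simpa [LinearMap.mem_ker, LinearMap.comp_apply] using ha
        obtain ⟨y, hy⟩ := this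
        refine ⟨y, ?_⟩
        have : f (h' y) = f a := by rw [show f (h' y) = f' y from LinearMap.congr_fun hcomm₁ y, hy]
        exact Subtype.ext (hf this)
    exact (Nat.card_congr (Equiv.ofBijective _ hbij)).symm
  -- card V₁ = card V₁' * card range (g ∘ f)
  have e1 : Nat.card V₁ = Nat.card V₁' * Nat.card (LinearMap.range (g ∘ₗ f)) := by
    rw [card_ker_mul_card_range' (g ∘ₗ f), hker]
  rw [e1, e2]
  ring
end

section
/- Let R be a ring and let h' : V₁' → V₁, f : V₁ → V₂, g : V₂ → V₃ be R-linear maps between R-modules such that f ∘ h' is injective, g is surjective, and range (f ∘ h') = ker g. Let π : V₁ → V₁ ⧸ range h' be the quotient map and let ī : V₁ ⧸ range h' → V₃ be the R-linear map induced by g ∘ f (which is well defined since (g ∘ f) ∘ h' = 0). Then the sequence 0 → V₁ → V₂ × (V₁ ⧸ range h') → V₃ → 0 is short exact, where the first map is v ↦ (f v, π v) and the second map is (w, c) ↦ g w − ī c; that is, v ↦ (f v, π v) is injective, (w, c) ↦ g w − ī c is surjective, and the range of the first map equals the kernel of the second. -/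
namespace LinearMap

variable {R M N P Q : Type*} [Ring R] [AddCommGroup M] [Module R M] [AddCommGroup N] [Module R N]
  [AddCommGroup P] [Module R P] [AddCommGroup Q] [Module R Q]

theorem injective_prod_mkQ_range {M' : Type*} [AddCommGroup M'] [Module R M']
    (h : M' →ₗ[R] M) (f : M →ₗ[R] N) (hinj : Function.Injective (f ∘ₗ h)) :
    Function.Injective (f.prod (range h).mkQ) := by
  have hdisj : Disjoint (range h) (ker f) :=
    disjoint_ker_iff_injOn.mpr (coe_range h ▸ Function.Injective.injOn_range (g := f) hinj)
  rw [← ker_eq_bot, ker_prod, Submodule.ker_mkQ, inf_comm]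
  exact hdisj.eq_bot

theorem surjective_comp_fst_sub {g : N →ₗ[R] P} (hg : Function.Surjective g) (k : Q →ₗ[R] P) :
    Function.Surjective (g ∘ₗ fst R N Q - k ∘ₗ snd R N Q) := fun y ↦
  let ⟨w, hw⟩ := hg y
  ⟨(w, 0), by simp [hw]⟩

variable {f : M →ₗ[R] N} {p : Submodule R M} {g : N →ₗ[R] P} {ibar : (M ⧸ p) →ₗ[R] P}

theorem range_prod_mkQ_le_ker_sub (hibar : ibar ∘ₗ p.mkQ = g ∘ₗ f) :
    range (f.prod p.mkQ) ≤ ker (g ∘ₗ fst R N (M ⧸ p) - ibar ∘ₗ snd R N (M ⧸ p)) := by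
  rw [range_le_ker_iff, sub_comp, comp_assoc, comp_assoc, fst_prod, snd_prod, hibar, sub_self]

theorem ker_sub_le_range_prod_mkQ (hibar : ibar ∘ₗ p.mkQ = g ∘ₗ f) (hker : ker g ≤ p.map f) :
    ker (g ∘ₗ fst R N (M ⧸ p) - ibar ∘ₗ snd R N (M ⧸ p)) ≤ range (f.prod p.mkQ) := by
  rintro ⟨w, c⟩ hwc
  obtain ⟨v, rfl⟩ := p.mkQ_surjective c
  have hv : ibar (p.mkQ v) = g (f v) := LinearMap.congr_fun hibar v
  have hgw : g w = g (f v) := by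
    simpa only [mem_ker, sub_apply, comp_apply, fst_apply, snd_apply, hv, sub_eq_zero] using hwc
  -- moving `v` by `u ∈ p` keeps its class and turns `f v` into `w`
  obtain ⟨u, hu, hfu⟩ : w - f v ∈ p.map f := hker (sub_mem_ker_iff.mpr hgw)
  exact ⟨v + u, by simp [hfu, (Submodule.Quotient.mk_eq_zero p).mpr hu]⟩

theorem range_prod_mkQ_eq_ker_sub (hibar : ibar ∘ₗ p.mkQ = g ∘ₗ f) (hker : ker g ≤ p.map f) :
    range (f.prod p.mkQ) = ker (g ∘ₗ fst R N (M ⧸ p) - ibar ∘ₗ snd R N (M ⧸ p)) :=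
  (range_prod_mkQ_le_ker_sub hibar).antisymm (ker_sub_le_range_prod_mkQ hibar hker)

end LinearMap

theorem short_exact_prod_coker
    {R : Type*} [Ring R]
    {V₁' V₁ V₂ V₃ : Type*}
    [AddCommGroup V₁'] [Module R V₁']
    [AddCommGroup V₁] [Module R V₁]
    [AddCommGroup V₂] [Module R V₂]
    [AddCommGroup V₃] [Module R V₃]
    (h' : V₁' →ₗ[R] V₁) (f : V₁ →ₗ[R] V₂) (g : V₂ →ₗ[R] V₃)
    (hinj : Function.Injective (f ∘ₗ h')) (hsurj : Function.Surjective g)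
    (hex : LinearMap.range (f ∘ₗ h') = LinearMap.ker g)
    (ibar : (V₁ ⧸ LinearMap.range h') →ₗ[R] V₃)
    (hibar : ibar ∘ₗ (LinearMap.range h').mkQ = g ∘ₗ f) :
    Function.Injective (LinearMap.prod f (LinearMap.range h').mkQ) ∧
    Function.Surjective
      (g ∘ₗ LinearMap.fst R V₂ (V₁ ⧸ LinearMap.range h') -
        ibar ∘ₗ LinearMap.snd R V₂ (V₁ ⧸ LinearMap.range h')) ∧
    LinearMap.range (LinearMap.prod f (LinearMap.range h').mkQ) =
      LinearMap.ker
        (g ∘ₗ LinearMap.fst R V₂ (V₁ ⧸ LinearMap.range h') -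
          ibar ∘ₗ LinearMap.snd R V₂ (V₁ ⧸ LinearMap.range h')) := by
  have hker : LinearMap.ker g ≤ (LinearMap.range h').map f := by
    rw [← hex, LinearMap.range_comp]
  exact ⟨LinearMap.injective_prod_mkQ_range h' f hinj,
    LinearMap.surjective_comp_fst_sub hsurj ibar, LinearMap.range_prod_mkQ_eq_ker_sub hibar hker⟩
end
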